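/- arXiv:1712.09233 — 5 statements merged into one kernel-verified Lean document; each statement's English description precedes it below -/
import Mathlib

section
/- Fix an integer n ≥ 3 and real parameters l, l̃ each satisfying the admissibility condition 2·sin(π/(2n)) < l < 2·sin(π/n). If γ : [0,1] → ℝ² is a continuous map such that for every t ∈ [0,1] the pair γ(t) is a positive solution of the n-gonal Siamese system with parameters (l, l̃), then γ is constant. (In other words, no Siamese dipyramid is flexible: there is no nonconstant continuous deformation preserving the lengths of edges.) -/
/-!
Write `s = x²`. Since `sin² (n φ) = P (sin² φ)` for a polynomial `P` of degree `n` (built from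
the Chebyshev polynomial `Tₙ`), the first Siamese equation reads `x̃² = M s` with
`M s = (1 - s) P (l² / (4 (1 - s)))` (`siameseSqMap`), and the second one, multiplied by
`(1 - x̃²)ⁿ`, reads `N x̃² = (1 - x̃²)ⁿ s` with `N` a polynomial (`siameseSqMapHom`). Hence `x²`
is a zero of `H s = N (M s) - s (1 - M s)ⁿ` (`siameseResidual`), which is analytic on `s < 1`.
Along a flex, `x` determines `x̃`, so a nonconstant flex makes `x` sweep an interval and `H`
vanishes on all of `(-∞, 1)`. But at `s = 1 - l² / (4 sin² φ)` we have
`M s = l² sin² (n φ) / (4 sin² φ)`, and two angles with the same value `M ≠ 1` (`π / n` and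
`2π / n` for `n ≥ 4`, `π / 4` and `π / 2` for `n = 3`) give distinct `s₁, s₂` with
`H s₁ - H s₂ = (s₂ - s₁) (1 - M)ⁿ ≠ 0`.
-/

/-- `(x, x̃) = p` is a positive solution of the `n`-gonal Siamese system with
parameters `(l, l̃)`. -/
def SiamesePosSol (n : ℕ) (l lt : ℝ) (p : ℝ × ℝ) : Prop :=
  0 < p.1 ∧ p.1 < 1 ∧ 0 < p.2 ∧ p.2 < 1 ∧
  l ≤ 2 * Real.sqrt (1 - p.1 ^ 2) ∧ lt ≤ 2 * Real.sqrt (1 - p.2 ^ 2) ∧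
  p.2 = Real.sqrt (1 - p.1 ^ 2) *
      Real.sin (n * Real.arcsin (l / (2 * Real.sqrt (1 - p.1 ^ 2)))) ∧
  p.1 = Real.sqrt (1 - p.2 ^ 2) *
      Real.sin (n * Real.arcsin (lt / (2 * Real.sqrt (1 - p.2 ^ 2))))

open Polynomial Real Set

noncomputable def sinSqPoly (n : ℕ) : ℝ[X] :=
  C (1 / 2) * (1 - (Chebyshev.T ℝ n).comp (1 - 2 * X))

theorem sinSqPoly_eval_sin_sq (n : ℕ) (φ : ℝ) :
    (sinSqPoly n).eval (sin φ ^ 2) = sin (n * φ) ^ 2 := by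
  have h : 1 - 2 * sin φ ^ 2 = cos (2 * φ) := by rw [cos_two_mul, cos_sq']; ring
  simp only [sinSqPoly, eval_mul, eval_C, eval_sub, eval_one, eval_comp, eval_mul, eval_X,
    eval_ofNat, h, Chebyshev.T_real_cos, Int.cast_natCast]
  rw [show (n : ℝ) * (2 * φ) = 2 * (n * φ) by ring, cos_two_mul, cos_sq']
  ring

theorem natDegree_sinSqPoly_le (n : ℕ) : (sinSqPoly n).natDegree ≤ n := by
  unfold sinSqPoly
  refine (natDegree_C_mul_le _ _).trans ((natDegree_sub_le _ _).trans (max_le (by simp) ?_))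
  refine natDegree_comp_le.trans ?_
  rw [Chebyshev.natDegree_T, Int.natAbs_natCast]
  have : (1 - 2 * X : ℝ[X]).natDegree ≤ 1 := by compute_degree
  nlinarith

theorem AnalyticOnNhd.eqOn_zero_of_eqOn_zero_Icc {E : Type*} [NormedAddCommGroup E]
    [NormedSpace ℝ E] {f : ℝ → E} {U : Set ℝ} {a b : ℝ} (hf : AnalyticOnNhd ℝ f U)
    (hU : IsPreconnected U) (hab : a < b) (hsub : Icc a b ⊆ U) (h : EqOn f 0 (Icc a b)) :
    EqOn f 0 U :=
  hf.eqOn_zero_of_preconnected_of_eventuallyEq_zero hU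
    (hsub ⟨by linarith, by linarith⟩ : (a + b) / 2 ∈ U)
    (Filter.eventuallyEq_of_mem (Icc_mem_nhds (by linarith) (by linarith)) h)

theorem AnalyticOnNhd.eqOn_zero_Iio_one_of_forall_sq {E : Type*} [NormedAddCommGroup E]
    [NormedSpace ℝ E] {f : ℝ → E} (hf : AnalyticOnNhd ℝ f (Iio 1)) {a b : ℝ}
    (ha : 0 ≤ a) (hb : 0 ≤ b) (ha₁ : a < 1) (hb₁ : b < 1) (hab : a ≠ b)
    (h : ∀ ξ ∈ uIcc a b, f (ξ ^ 2) = 0) :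
    EqOn f 0 (Iio 1) := by
  refine hf.eqOn_zero_of_eqOn_zero_Icc (convex_Iio 1).isPreconnected
    (a := min a b ^ 2) (b := max a b ^ 2) ?_ ?_ fun σ hσ ↦ ?_
  · exact pow_lt_pow_left₀ (min_lt_max.mpr hab) (le_min ha hb) two_ne_zero
  · intro σ hσ
    have hm : max a b < 1 := max_lt ha₁ hb₁
    have hm0 : 0 ≤ max a b := le_max_of_le_left ha
    exact hσ.2.trans_lt (by nlinarith)
  · have hσ0 : 0 ≤ σ := (sq_nonneg _).trans hσ.1
    have hmax : √σ ≤ max a b := by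
      simpa [sqrt_sq (le_max_of_le_left ha)] using sqrt_le_sqrt hσ.2
    have := h (√σ) ⟨le_sqrt_of_sq_le hσ.1, hmax⟩
    rwa [sq_sqrt hσ0] at this

noncomputable def siameseSqMap (n : ℕ) (l s : ℝ) : ℝ :=
  (1 - s) * (sinSqPoly n).eval (l ^ 2 / 4 / (1 - s))

/-- `(1 - t) ^ n * siameseSqMap n l t`, written as a polynomial in `t` so that it stays analytic
at `t = 1`. -/
noncomputable def siameseSqMapHom (n : ℕ) (l t : ℝ) : ℝ :=
  (1 - t) * MvPolynomial.eval ![l ^ 2 / 4, 1 - t] ((sinSqPoly n).homogenize n)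

noncomputable def siameseResidual (n : ℕ) (l lt s : ℝ) : ℝ :=
  siameseSqMapHom n lt (siameseSqMap n l s) - s * (1 - siameseSqMap n l s) ^ n

section

variable {n : ℕ} {l lt s t φ : ℝ}

theorem siameseSqMap_of_sq_eq (hs : s ≠ 1) (h : l ^ 2 = 4 * (1 - s) * sin φ ^ 2) :
    siameseSqMap n l s = (1 - s) * sin (n * φ) ^ 2 := by
  have hs' : 1 - s ≠ 0 := sub_ne_zero.mpr hs.symm
  rw [siameseSqMap, h, show 4 * (1 - s) * sin φ ^ 2 / 4 / (1 - s) = sin φ ^ 2 by field_simp,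
    sinSqPoly_eval_sin_sq]

theorem siameseSqMap_eq_sq (hl : 0 ≤ l) (hs : s < 1) (hls : l ≤ 2 * √(1 - s)) :
    siameseSqMap n l s = (√(1 - s) * sin (n * arcsin (l / (2 * √(1 - s))))) ^ 2 := by
  have hc : 0 < √(1 - s) := sqrt_pos.mpr (by linarith)
  have hu : l / (2 * √(1 - s)) ≤ 1 := (div_le_one (by positivity)).mpr hls
  have hu' : -1 ≤ l / (2 * √(1 - s)) := by
    have : 0 ≤ l / (2 * √(1 - s)) := by positivity
    linarith
  have hs' : 1 - s ≠ 0 := by linarith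
  rw [siameseSqMap_of_sq_eq hs.ne, mul_pow, sq_sqrt (by linarith)]
  rw [sin_arcsin hu' hu, div_pow, mul_pow, sq_sqrt (by linarith)]
  field_simp
  ring

theorem siameseSqMapHom_eq (ht : t ≠ 1) :
    siameseSqMapHom n l t = (1 - t) ^ n * siameseSqMap n l t := by
  have ht' : 1 - t ≠ 0 := sub_ne_zero.mpr ht.symm
  rw [siameseSqMapHom, eval_homogenize (natDegree_sinSqPoly_le n) _ (by simpa using ht'),
    siameseSqMap]
  simp only [Matrix.cons_val_zero, Matrix.cons_val_one]
  ring

theorem analyticAt_siameseSqMap (hs : s ≠ 1) : AnalyticAt ℝ (siameseSqMap n l) s := by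
  have hs' : 1 - s ≠ 0 := sub_ne_zero.mpr hs.symm
  have hinner : AnalyticAt ℝ (fun s : ℝ ↦ l ^ 2 / 4 / (1 - s)) s :=
    analyticAt_const.div (analyticAt_const.sub analyticAt_id) hs'
  exact (analyticAt_const.sub analyticAt_id).mul (hinner.aeval_polynomial (sinSqPoly n))

theorem analyticAt_siameseSqMapHom : AnalyticAt ℝ (siameseSqMapHom n l) t := by
  refine (analyticAt_const.sub analyticAt_id).mul ?_
  refine AnalyticAt.aeval_mvPolynomial (f := fun t ↦ ![l ^ 2 / 4, 1 - t]) (fun i ↦ ?_) _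
  fin_cases i
  · exact analyticAt_const
  · exact analyticAt_const.sub analyticAt_id

theorem analyticOnNhd_siameseResidual : AnalyticOnNhd ℝ (siameseResidual n l lt) (Iio 1) := by
  intro s hs
  have hM := analyticAt_siameseSqMap (n := n) (l := l) (ne_of_lt hs)
  exact (analyticAt_siameseSqMapHom.comp hM).sub
    (analyticAt_id.mul ((analyticAt_const.sub hM).pow n))

theorem SiamesePosSol.siameseResidual_eq_zero {p : ℝ × ℝ} (hl : 0 ≤ l) (hlt : 0 ≤ lt)
    (hp : SiamesePosSol n l lt p) : siameseResidual n l lt (p.1 ^ 2) = 0 := by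
  obtain ⟨hx0, hx1, hy0, hy1, hlx, hlty, hy, hx⟩ := hp
  have hM : siameseSqMap n l (p.1 ^ 2) = p.2 ^ 2 := by
    rw [siameseSqMap_eq_sq hl (by nlinarith) hlx, ← hy]
  have hN : siameseSqMapHom n lt (p.2 ^ 2) = (1 - p.2 ^ 2) ^ n * p.1 ^ 2 := by
    rw [siameseSqMapHom_eq (by nlinarith), siameseSqMap_eq_sq hlt (by nlinarith) hlty, ← hx]
  rw [siameseResidual, hM, hN]
  ring

theorem SiamesePosSol.eq_of_fst_eq {p q : ℝ × ℝ} (hp : SiamesePosSol n l lt p)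
    (hq : SiamesePosSol n l lt q) (h : p.1 = q.1) : p = q :=
  Prod.ext h (by rw [hp.2.2.2.2.2.2.1, hq.2.2.2.2.2.2.1, h])

theorem eq_of_siameseResidual_eq_zero {s₁ s₂ : ℝ} (h₁ : siameseResidual n l lt s₁ = 0)
    (h₂ : siameseResidual n l lt s₂ = 0) (hM : siameseSqMap n l s₁ = siameseSqMap n l s₂)
    (hM₁ : siameseSqMap n l s₂ ≠ 1) : s₁ = s₂ := by
  rw [siameseResidual, hM] at h₁
  rw [siameseResidual] at h₂
  have : (s₁ - s₂) * (1 - siameseSqMap n l s₂) ^ n = 0 := by linear_combination h₂ - h₁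
  have hpow : (1 - siameseSqMap n l s₂) ^ n ≠ 0 := pow_ne_zero _ (sub_ne_zero.mpr hM₁.symm)
  exact sub_eq_zero.mp ((mul_eq_zero.mp this).resolve_right hpow)

theorem siameseSqMap_one_sub_div_sin_sq (hl : l ≠ 0) (hφ : sin φ ≠ 0) :
    siameseSqMap n l (1 - l ^ 2 / (4 * sin φ ^ 2)) =
      l ^ 2 / 4 * (sin (n * φ) ^ 2 / sin φ ^ 2) := by
  rw [siameseSqMap_of_sq_eq (φ := φ)]
  · ring
  · simp [hl, hφ]
  · field_simp
    ring

theorem sin_sq_eq_of_siameseResidual_eqOn_zero (hH : EqOn (siameseResidual n l lt) 0 (Iio 1))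
    (hl : l ≠ 0)
    {φ₁ φ₂ r : ℝ} (hφ₁ : sin φ₁ ≠ 0) (hφ₂ : sin φ₂ ≠ 0)
    (hr₁ : sin (n * φ₁) ^ 2 / sin φ₁ ^ 2 = r) (hr₂ : sin (n * φ₂) ^ 2 / sin φ₂ ^ 2 = r)
    (hr : l ^ 2 / 4 * r ≠ 1) :
    sin φ₁ ^ 2 = sin φ₂ ^ 2 := by
  have hmem : ∀ φ, sin φ ≠ 0 → 1 - l ^ 2 / (4 * sin φ ^ 2) ∈ Iio 1 := fun φ hφ ↦ by
    simp only [mem_Iio, sub_lt_self_iff]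
    positivity
  have hs := eq_of_siameseResidual_eq_zero (hH (hmem φ₁ hφ₁)) (hH (hmem φ₂ hφ₂))
    (by rw [siameseSqMap_one_sub_div_sin_sq hl hφ₁, siameseSqMap_one_sub_div_sin_sq hl hφ₂, hr₁,
      hr₂])
    (by rwa [siameseSqMap_one_sub_div_sin_sq hl hφ₂, hr₂])
  field_simp at hs
  have h : l ^ 2 * (sin φ₁ ^ 2 - sin φ₂ ^ 2) = 0 := by linear_combination hs
  exact sub_eq_zero.mp ((mul_eq_zero.mp h).resolve_left (pow_ne_zero 2 hl))

theorem siameseResidual_not_eqOn_zero_of_four_le (hn : 4 ≤ n) (hl : l ≠ 0) :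
    ¬ EqOn (siameseResidual n l lt) 0 (Iio 1) := by
  intro hH
  have hn0 : (0 : ℝ) < n := by positivity
  have hn4 : (4 : ℝ) ≤ n := by exact_mod_cast hn
  have h₁ : 0 < π / n := by positivity
  have h₂ : 2 * π / n ≤ π / 2 := by
    rw [div_le_div_iff₀ hn0 two_pos]
    nlinarith [pi_pos]
  have hlt : π / n < 2 * π / n := by
    rw [mul_div_assoc]
    linarith
  have hsin₁ : 0 < sin (π / n) := sin_pos_of_pos_of_lt_pi h₁ (by linarith [pi_pos])
  have hsin_lt : sin (π / n) < sin (2 * π / n) :=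
    strictMonoOn_sin ⟨by linarith [pi_pos], by linarith⟩ ⟨by linarith [pi_pos], h₂⟩ hlt
  have hr₁ : sin (n * (π / n)) ^ 2 / sin (π / n) ^ 2 = 0 := by
    rw [mul_div_cancel₀ _ hn0.ne', sin_pi]
    simp
  have hr₂ : sin (n * (2 * π / n)) ^ 2 / sin (2 * π / n) ^ 2 = 0 := by
    rw [mul_div_cancel₀ _ hn0.ne', sin_two_pi]
    simp
  have := sin_sq_eq_of_siameseResidual_eqOn_zero hH hl hsin₁.ne' (hsin₁.trans hsin_lt).ne' hr₁
    hr₂ (by simp)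
  nlinarith

theorem siameseResidual_three_not_eqOn_zero (hl : l ≠ 0) (hl2 : l ^ 2 ≠ 4) :
    ¬ EqOn (siameseResidual 3 l lt) 0 (Iio 1) := by
  intro hH
  have hsin₁ : sin (π / 4) ^ 2 = 1 / 2 := by
    rw [sin_pi_div_four, div_pow, sq_sqrt zero_le_two]
    norm_num
  have hsin₃ : sin (3 * (π / 4)) ^ 2 = 1 / 2 := by
    rw [show 3 * (π / 4) = π - π / 4 by ring, sin_pi_sub, hsin₁]
  have hsin₃' : sin (3 * (π / 2)) = -1 := by
    rw [show 3 * (π / 2) = π / 2 + π by ring, sin_add_pi, sin_pi_div_two]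
  have := sin_sq_eq_of_siameseResidual_eqOn_zero (r := 1) hH hl (φ₁ := π / 4) (φ₂ := π / 2)
    (sin_pos_of_pos_of_lt_pi (by positivity) (by linarith [pi_pos])).ne' (by simp)
    (by push_cast; rw [hsin₃, hsin₁]; norm_num)
    (by push_cast; rw [hsin₃', sin_pi_div_two]; norm_num)
    (by contrapose! hl2; linarith)
  rw [hsin₁, sin_pi_div_two] at this
  norm_num at this

end

theorem siamese_dipyramid_not_flexible_general (n : ℕ) (hn : 3 ≤ n) (l lt : ℝ)
    (hl₁ : 2 * Real.sin (Real.pi / (2 * n)) < l) (hl₂ : l < 2 * Real.sin (Real.pi / n))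
    (hlt₁ : 2 * Real.sin (Real.pi / (2 * n)) < lt)
    (γ : ℝ → ℝ × ℝ) (hγ : ContinuousOn γ (Set.Icc 0 1))
    (hsol : ∀ t ∈ Set.Icc (0:ℝ) 1, SiamesePosSol n l lt (γ t)) :
    ∀ s ∈ Set.Icc (0:ℝ) 1, ∀ t ∈ Set.Icc (0:ℝ) 1, γ s = γ t := by
  intro s hs t ht
  by_contra hne
  have hsin_pos : 0 < sin (π / (2 * n)) :=
    sin_pos_of_pos_of_lt_pi (by positivity)
      (div_lt_self pi_pos (by norm_cast; omega))
  have hl : 0 < l := by linarith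
  have hlt : 0 < lt := by linarith
  have hl2 : l < 2 := by linarith [sin_le_one (π / n)]
  have hx : (γ s).1 ≠ (γ t).1 := fun h ↦ hne ((hsol s hs).eq_of_fst_eq (hsol t ht) h)
  have hzero : ∀ ξ ∈ uIcc (γ s).1 (γ t).1, siameseResidual n l lt (ξ ^ 2) = 0 := by
    intro ξ hξ
    obtain ⟨τ, hτ, rfl⟩ := intermediate_value_uIcc
      ((continuous_fst.comp_continuousOn hγ).mono (uIcc_subset_Icc hs ht)) hξ
    exact (hsol τ (uIcc_subset_Icc hs ht hτ)).siameseResidual_eq_zero hl.le hlt.le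
  have hH := analyticOnNhd_siameseResidual.eqOn_zero_Iio_one_of_forall_sq
    (hsol s hs).1.le (hsol t ht).1.le (hsol s hs).2.1 (hsol t ht).2.1 hx hzero
  rcases hn.eq_or_lt with rfl | hn4
  · exact siameseResidual_three_not_eqOn_zero hl.ne' (by nlinarith) hH
  · exact siameseResidual_not_eqOn_zero_of_four_le hn4 hl.ne' hH

/-- No Siamese dipyramid is flexible: any continuous deformation through
positive solutions of the Siamese system is constant. -/
theorem siamese_dipyramid_not_flexible (n : ℕ) (hn : 3 ≤ n) (l lt : ℝ)
    (hl₁ : 2 * Real.sin (Real.pi / (2 * n)) < l) (hl₂ : l < 2 * Real.sin (Real.pi / n))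
    (hlt₁ : 2 * Real.sin (Real.pi / (2 * n)) < lt) (hlt₂ : lt < 2 * Real.sin (Real.pi / n))
    (γ : ℝ → ℝ × ℝ) (hγ : ContinuousOn γ (Set.Icc 0 1))
    (hsol : ∀ t ∈ Set.Icc (0:ℝ) 1, SiamesePosSol n l lt (γ t)) :
    ∀ s ∈ Set.Icc (0:ℝ) 1, ∀ t ∈ Set.Icc (0:ℝ) 1, γ s = γ t :=
  siamese_dipyramid_not_flexible_general n hn l lt hl₁ hl₂ hlt₁ γ hγ hsol
end

section
/- Fix an integer n ≥ 3 and real numbers x, x̃ with x > 0, x̃ > 0, x̃ < √(1−x²) and x < √(1−x̃²). Define l := 2·√(1−x²)·sin(π/n − (1/n)·arcsin(x̃/√(1−x²))) and l̃ := 2·√(1−x̃²)·sin(π/n − (1/n)·arcsin(x/√(1−x̃²))). Then 0 < l < 2·sin(π/n), 0 < l̃ < 2·sin(π/n), l ≤ 2·√(1−x²), l̃ ≤ 2·√(1−x̃²), and the two equations x̃ = √(1−x²)·sin(n·arcsin(l/(2·√(1−x²)))) and x = √(1−x̃²)·sin(n·arcsin(l̃/(2·√(1−x̃²)))) both hold.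 (Thus every such pair of heights (x, x̃) determines a well-defined n-gonal Siamese dipyramid whose edge lengths are given by these formulas.) -/
lemma siamese_key (n : ℕ) (hn : 3 ≤ n) (a r : ℝ) (ha : 0 < a) (har : a < r) (hr1 : r < 1) :
    0 < 2 * r * Real.sin (Real.pi / n - (1 / n) * Real.arcsin (a / r)) ∧
    2 * r * Real.sin (Real.pi / n - (1 / n) * Real.arcsin (a / r)) < 2 * Real.sin (Real.pi / n) ∧
    2 * r * Real.sin (Real.pi / n - (1 / n) * Real.arcsin (a / r)) ≤ 2 * r ∧
    a = r * Real.sin (n * Real.arcsin (2 * r *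
      Real.sin (Real.pi / n - (1 / n) * Real.arcsin (a / r)) / (2 * r))) := by
  have hr : 0 < r := ha.trans har
  have hn' : (3:ℝ) ≤ n := by exact_mod_cast hn
  have hnpos : (0:ℝ) < n := by linarith
  have hpi := Real.pi_pos
  have hq0 : 0 < a / r := div_pos ha hr
  have hq1 : a / r < 1 := (div_lt_one hr).mpr har
  obtain ⟨θ, hθ⟩ : ∃ θ, θ = Real.arcsin (a / r) := ⟨_, rfl⟩
  have hθ0 : 0 < θ := hθ ▸ Real.arcsin_pos.mpr hq0
  have hθ2 : θ ≤ Real.pi / 2 := hθ ▸ Real.arcsin_le_pi_div_two _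
  obtain ⟨φ, hφ⟩ : ∃ φ, φ = Real.pi / n - (1 / n) * θ := ⟨_, rfl⟩
  have hπn : (n:ℝ) * (Real.pi / n) = Real.pi := by field_simp
  have hφeq : (n:ℝ) * φ = Real.pi - θ := by
    rw [hφ]; field_simp
  have hφ0 : 0 < φ := by nlinarith
  have hφlt : φ < Real.pi / n := by nlinarith
  have hπn3 : Real.pi / n ≤ Real.pi / 3 :=
    div_le_div_of_nonneg_left hpi.le (by norm_num) hn'
  have hφle : φ ≤ Real.pi / 2 := by linarith
  have hπn2 : Real.pi / n ≤ Real.pi / 2 := by linarith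
  have hsφ : 0 < Real.sin φ := Real.sin_pos_of_pos_of_lt_pi hφ0 (by linarith)
  have hdiv : 2 * r * Real.sin φ / (2 * r) = Real.sin φ := by field_simp
  have hsin_lt : Real.sin φ < Real.sin (Real.pi / n) :=
    Real.strictMonoOn_sin (Set.mem_Icc.mpr ⟨by linarith, hφle⟩)
      (Set.mem_Icc.mpr ⟨by linarith, hπn2⟩) hφlt
  rw [← hθ, ← hφ]
  refine ⟨by positivity, by nlinarith, by nlinarith [Real.sin_le_one φ], ?_⟩
  rw [hdiv, Real.arcsin_sin (by linarith) hφle, hφeq, Real.sin_pi_sub, hθ,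
    Real.sin_arcsin (by linarith) hq1.le]
  field_simp

/-- Every pair of heights `(x, x̃)` in the moduli domain determines a
well-defined `n`-gonal Siamese dipyramid whose edge lengths are given by the
explicit formulas. -/
theorem siamese_moduli_representation (n : ℕ) (hn : 3 ≤ n) (x xt : ℝ)
    (hx : 0 < x) (hxt : 0 < xt)
    (h₁ : xt < Real.sqrt (1 - x ^ 2)) (h₂ : x < Real.sqrt (1 - xt ^ 2)) :
    let l := 2 * Real.sqrt (1 - x ^ 2) *
      Real.sin (Real.pi / n - (1 / n) * Real.arcsin (xt / Real.sqrt (1 - x ^ 2)))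
    let lt := 2 * Real.sqrt (1 - xt ^ 2) *
      Real.sin (Real.pi / n - (1 / n) * Real.arcsin (x / Real.sqrt (1 - xt ^ 2)))
    0 < l ∧ l < 2 * Real.sin (Real.pi / n) ∧
    0 < lt ∧ lt < 2 * Real.sin (Real.pi / n) ∧
    l ≤ 2 * Real.sqrt (1 - x ^ 2) ∧ lt ≤ 2 * Real.sqrt (1 - xt ^ 2) ∧
    xt = Real.sqrt (1 - x ^ 2) *
      Real.sin (n * Real.arcsin (l / (2 * Real.sqrt (1 - x ^ 2)))) ∧
    x = Real.sqrt (1 - xt ^ 2) *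
      Real.sin (n * Real.arcsin (lt / (2 * Real.sqrt (1 - xt ^ 2)))) := by
  have hpos1 : (0:ℝ) < 1 - x ^ 2 := Real.sqrt_pos.mp (hxt.trans h₁)
  have hpos2 : (0:ℝ) < 1 - xt ^ 2 := Real.sqrt_pos.mp (hx.trans h₂)
  have hr1 : Real.sqrt (1 - x ^ 2) < 1 := by
    calc Real.sqrt (1 - x ^ 2) < Real.sqrt 1 :=
          Real.sqrt_lt_sqrt hpos1.le (by nlinarith)
      _ = 1 := Real.sqrt_one
  have hr2 : Real.sqrt (1 - xt ^ 2) < 1 := by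
    calc Real.sqrt (1 - xt ^ 2) < Real.sqrt 1 :=
          Real.sqrt_lt_sqrt hpos2.le (by nlinarith)
      _ = 1 := Real.sqrt_one
  obtain ⟨k1a, k1b, k1c, k1d⟩ := siamese_key n hn xt _ hxt h₁ hr1
  obtain ⟨k2a, k2b, k2c, k2d⟩ := siamese_key n hn x _ hx h₂ hr2
  exact ⟨k1a, k1b, k2a, k2b, k1c, k2c, k1d, k2d⟩
end

section
/- Fix an integer n ≥ 3 and a real l satisfying the admissibility condition 2·sin(π/(2n)) < l < 2·sin(π/n), and set x_max := √(1 − l²/(4·sin²(π/n))). Then there exists x with 0 < x < x_max such that x = √(1−x²)·sin(n·arcsin(l/(2·√(1−x²)))). (Geometrically: for every n ≥ 3 and every admissible l there exists an equifacial n-gonal Siamese dipyramid, with equal heights x = x̃, all of whose 4n faces are congruent to the isosceles triangle Δ(l).) -/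
/-!
The difference between the aperture and the height is continuous on `[0, x_max]`. At `x = 0` it
is `sin (n · arcsin (l/2))`, positive because `l < 2 sin (π/n)` puts `arcsin (l/2)` in
`(0, π/n)`. At `x = x_max` the argument of `arcsin` is exactly `sin (π/n)`, so the aperture is
`sin π · (…) = 0` and the difference is `-x_max < 0`. The intermediate value theorem gives the
fixed point.
-/

open Real Set

noncomputable def aperture (n : ℕ) (l x : ℝ) : ℝ :=
  √(1 - x ^ 2) * sin (n * arcsin (l / (2 * √(1 - x ^ 2))))

theorem continuousOn_aperture (n : ℕ) (l : ℝ) : ContinuousOn (aperture n l) (Ioo (-1) 1) := by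
  have hne : ∀ x ∈ Ioo (-1 : ℝ) 1, 2 * √(1 - x ^ 2) ≠ 0 := fun x hx => by
    have : 0 < 1 - x ^ 2 := by nlinarith [hx.1, hx.2]
    positivity
  unfold aperture
  fun_prop (disch := assumption)

theorem aperture_zero (n : ℕ) (l : ℝ) : aperture n l 0 = sin (n * arcsin (l / 2)) := by
  simp [aperture]

theorem pi_div_natCast_mem_Ioc {n : ℕ} (hn : 2 ≤ n) : π / n ∈ Ioc 0 (π / 2) :=
  ⟨div_pos pi_pos (by positivity),
    div_le_div_of_nonneg_left pi_pos.le two_pos (by exact_mod_cast hn)⟩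

theorem sin_pi_div_natCast_pos {n : ℕ} (hn : 2 ≤ n) : 0 < sin (π / n) :=
  sin_pos_of_pos_of_lt_pi (pi_div_natCast_mem_Ioc hn).1
    ((pi_div_natCast_mem_Ioc hn).2.trans_lt (half_lt_self pi_pos))

theorem aperture_zero_pos {n : ℕ} {l : ℝ} (hn : 2 ≤ n) (hl₀ : 0 < l)
    (hl : l < 2 * sin (π / n)) : 0 < aperture n l 0 := by
  have hn₀ : (0 : ℝ) < n := by positivity
  obtain ⟨hπn₀, hπn⟩ := pi_div_natCast_mem_Ioc hn
  have hlt : arcsin (l / 2) < π / n :=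
    (arcsin_lt_iff_lt_sin' ⟨by linarith [pi_pos], hπn⟩).2 (by linarith)
  rw [aperture_zero]
  apply sin_pos_of_pos_of_lt_pi (mul_pos hn₀ (arcsin_pos.2 (by positivity)))
  calc (n : ℝ) * arcsin (l / 2) < n * (π / n) := by gcongr
    _ = π := mul_div_cancel₀ π hn₀.ne'

theorem aperture_eq_zero_of_sqrt_eq {n : ℕ} {l x : ℝ} (hn : 2 ≤ n) (hl : l ≠ 0)
    (hx : √(1 - x ^ 2) = l / (2 * sin (π / n))) : aperture n l x = 0 := by
  have hn₀ : (0 : ℝ) < n := by positivity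
  have hs := (sin_pi_div_natCast_pos hn).ne'
  obtain ⟨hπn₀, hπn⟩ := pi_div_natCast_mem_Ioc hn
  have hlsl : l / (2 * (l / (2 * sin (π / n)))) = sin (π / n) := by field_simp
  rw [aperture, hx, hlsl, arcsin_sin (by linarith [pi_pos]) hπn, mul_div_cancel₀ π hn₀.ne',
    sin_pi, mul_zero]

theorem sqrt_one_sub_sq_sqrt_one_sub_sq {a : ℝ} (h₀ : 0 ≤ a) (h₁ : a ≤ 1) :
    √(1 - √(1 - a ^ 2) ^ 2) = a := by
  rw [sq_sqrt (by nlinarith), sub_sub_cancel, sqrt_sq h₀]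

theorem exists_mem_Ioo_apply_eq_self {f : ℝ → ℝ} {a b : ℝ} (hab : a ≤ b)
    (hf : ContinuousOn f (Icc a b)) (ha : a < f a) (hb : f b < b) :
    ∃ x ∈ Ioo a b, f x = x := by
  obtain ⟨x, hx, hfx⟩ := intermediate_value_Ioo' hab (hf.sub continuousOn_id)
    ⟨sub_neg.2 hb, sub_pos.2 ha⟩
  exact ⟨x, hx, sub_eq_zero.1 hfx⟩

/-- For every `n ≥ 3` and every admissible `l` there exists an equifacial
`n`-gonal Siamese dipyramid: the aperture function has a positive fixed point
below `x_max`. -/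
theorem equifacial_siamese_exists (n : ℕ) (hn : 3 ≤ n) (l : ℝ)
    (hl₁ : 2 * Real.sin (Real.pi / (2 * n)) < l)
    (hl₂ : l < 2 * Real.sin (Real.pi / n)) :
    ∃ x : ℝ, 0 < x ∧
      x < Real.sqrt (1 - l ^ 2 / (4 * Real.sin (Real.pi / n) ^ 2)) ∧
      x = Real.sqrt (1 - x ^ 2) *
        Real.sin (n * Real.arcsin (l / (2 * Real.sqrt (1 - x ^ 2)))) := by
  have hn₂ : 2 ≤ n := by omega
  have hs := sin_pi_div_natCast_pos hn₂
  have hl₀ : 0 < l := by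
    have : 0 < sin (π / (2 * n)) :=
      sin_pos_of_pos_of_lt_pi (by positivity) (div_lt_self pi_pos (by norm_cast; omega))
    linarith
  set a := l / (2 * sin (π / n))
  have ha₀ : 0 < a := by positivity
  have ha₁ : a < 1 := (div_lt_one (by positivity)).2 hl₂
  have hmax : l ^ 2 / (4 * sin (π / n) ^ 2) = a ^ 2 := by ring
  have hsub : Icc 0 √(1 - a ^ 2) ⊆ Ioo (-1) 1 := fun x hx =>
    ⟨by linarith [hx.1], hx.2.trans_lt ((sqrt_lt' one_pos).2 (by nlinarith))⟩
  have hend : aperture n l √(1 - a ^ 2) < √(1 - a ^ 2) := by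
    rw [aperture_eq_zero_of_sqrt_eq hn₂ hl₀.ne' (sqrt_one_sub_sq_sqrt_one_sub_sq ha₀.le ha₁.le)]
    exact sqrt_pos.2 (by nlinarith)
  rw [hmax]
  obtain ⟨x, ⟨hx₀, hxa⟩, hfix⟩ := exists_mem_Ioo_apply_eq_self (sqrt_nonneg _)
    ((continuousOn_aperture n l).mono hsub) (aperture_zero_pos hn₂ hl₀ hl₂) hend
  exact ⟨x, hx₀, hxa, hfix.symm⟩
end

section
/- For every odd integer n ≥ 3 there exists a polynomial P in three variables X, Y, L over ℝ with total degree n, with degree 1 in the variable Y, and with degree n − 1 in the variable X, such that for all real x with −1 < x < 1, all real l with 0 ≤ l ≤ 2·√(1−x²), and all real x̃, the equation x̃ = √(1−x²)·sin(n·arcsin(l/(2·√(1−x²)))) holds if and only if P(x, x̃, l) = 0. (Thus for odd n the defining equation of an n-gonal Goldberg dipyramid is an algebraic equation of order n, of first order with respect to the aperture x̃ and of order n − 1 with respect to the height x.) -/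
open MvPolynomial

noncomputable def goldQ : ℕ → MvPolynomial (Fin 3) ℝ
  | 0 => C (1/2 : ℝ) * X 2
  | 1 => C (3/2 : ℝ) * (1 - X 0 ^ 2) * X 2 - C (1/2 : ℝ) * X 2 ^ 3
  | (m+2) => (2 * (1 - X 0 ^ 2) - X 2 ^ 2) * goldQ (m+1) - (1 - X 0 ^ 2)^2 * goldQ m

lemma goldQ_eval (x xt l r θ : ℝ) (hr : r ^ 2 = 1 - x ^ 2)
    (hl : l = 2 * r * Real.sin θ) (m : ℕ) :
    MvPolynomial.eval ![x, xt, l] (goldQ m)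
      = r ^ (2*m+1) * Real.sin ((2*m+1 : ℕ) * θ) := by
  induction m using Nat.twoStepInduction with
  | zero =>
    simp [goldQ, hl]
    ring
  | one =>
    have h3 : ((2*1+1 : ℕ) : ℝ) = 3 := by norm_num
    simp only [goldQ, map_sub, map_mul, map_pow, map_one, eval_C, eval_X, map_ofNat,
      Matrix.cons_val_two, Matrix.tail_cons, Matrix.head_cons, Matrix.cons_val_zero, h3]
    rw [Real.sin_three_mul, hl, ← hr]
    ring
  | more m ih1 ih2 =>
    have hsin : Real.sin (((2*(m+2)+1 : ℕ) : ℝ) * θ)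
        = 2 * (1 - 2 * Real.sin θ ^ 2) * Real.sin (((2*(m+1)+1 : ℕ) : ℝ) * θ)
          - Real.sin (((2*m+1 : ℕ) : ℝ) * θ) := by
      push_cast
      have e1 : (2*(m:ℝ)+5) * θ = (2*m+3) * θ + 2*θ := by ring
      have e2 : (2*(m:ℝ)+1) * θ = (2*m+3) * θ - 2*θ := by ring
      have e3 : (2*((m:ℝ)+2)+1) * θ = (2*m+5) * θ := by ring
      have e4 : (2*((m:ℝ)+1)+1) * θ = (2*m+3) * θ := by ring
      have hc2 : Real.cos (2*θ) = 1 - 2 * Real.sin θ ^ 2 := by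
        rw [Real.cos_two_mul]
        nlinarith [Real.sin_sq_add_cos_sq θ]
      rw [e3, e4, e1, e2, Real.sin_add, Real.sin_sub, hc2]
      ring
    simp only [goldQ, map_sub, map_mul, map_pow, map_one, eval_X, map_ofNat,
      Matrix.cons_val_two, Matrix.tail_cons, Matrix.head_cons, Matrix.cons_val_zero,
      ih1, ih2, hsin]
    rw [← hr, hl]
    ring

lemma goldQ_supported (m : ℕ) :
    goldQ m ∈ MvPolynomial.supported ℝ ({0, 2} : Set (Fin 3)) := by
  have h0 : (X 0 : MvPolynomial (Fin 3) ℝ) ∈ supported ℝ ({0, 2} : Set (Fin 3)) :=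
    X_mem_supported.mpr (by simp)
  have h2 : (X 2 : MvPolynomial (Fin 3) ℝ) ∈ supported ℝ ({0, 2} : Set (Fin 3)) :=
    X_mem_supported.mpr (by simp)
  induction m using Nat.twoStepInduction with
  | zero =>
    exact mul_mem (Subalgebra.algebraMap_mem _ _) h2
  | one =>
    exact sub_mem (mul_mem (mul_mem (Subalgebra.algebraMap_mem _ _)
      (sub_mem (one_mem _) (pow_mem h0 2))) h2)
      (mul_mem (Subalgebra.algebraMap_mem _ _) (pow_mem h2 3))
  | more m ih1 ih2 =>
    exact sub_mem (mul_mem (sub_mem (mul_mem (by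
      simpa using Subalgebra.algebraMap_mem (supported ℝ ({0, 2} : Set (Fin 3))) (2:ℝ))
      (sub_mem (one_mem _) (pow_mem h0 2))) (pow_mem h2 2)) ih2)
      (mul_mem (pow_mem (sub_mem (one_mem _) (pow_mem h0 2)) 2) ih1)

lemma goldQ_not_mem_vars (m : ℕ) : (1 : Fin 3) ∉ (goldQ m).vars := by
  intro h
  have h2 := MvPolynomial.mem_supported.mp (goldQ_supported m) h
  simp only [Set.mem_insert_iff, Set.mem_singleton_iff] at h2
  rcases h2 with h2 | h2 <;> exact absurd h2 (by decide)

lemma vars_zero_imp (p : MvPolynomial (Fin 3) ℝ) (i : Fin 3) (h : i ∉ p.vars) :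
    MvPolynomial.degreeOf i p = 0 := by
  rw [degreeOf_eq_sup]
  apply Nat.le_antisymm _ (Nat.zero_le _)
  apply Finset.sup_le
  intro d hd
  by_contra hne
  exact h ((mem_vars i).mpr ⟨d, hd, Finsupp.mem_support_iff.mpr (by omega)⟩)

lemma oneSubX0Sq_totalDegree :
    ((1 - X 0 ^ 2 : MvPolynomial (Fin 3) ℝ)).totalDegree ≤ 2 := by
  refine le_trans (totalDegree_sub _ _) ?_
  simp only [totalDegree_one, max_le_iff]
  constructor
  · omega
  · exact le_trans (totalDegree_pow _ _) (by simp [totalDegree_X])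

lemma oneSubX0Sq_degreeOf0 :
    MvPolynomial.degreeOf 0 ((1 - X 0 ^ 2 : MvPolynomial (Fin 3) ℝ)) ≤ 2 := by
  refine le_trans (degreeOf_sub_le _ _ _) ?_
  simp only [max_le_iff]
  constructor
  · simpa using (degreeOf_C (1:ℝ) (0 : Fin 3)).le.trans (by omega)
  · exact le_trans (degreeOf_pow_le _ _ _) (by simp [degreeOf_X])

lemma goldQ_totalDegree (m : ℕ) : (goldQ m).totalDegree ≤ 2*m+1 := by
  induction m using Nat.twoStepInduction with
  | zero =>
    refine le_trans (totalDegree_mul _ _) ?_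
    simp [totalDegree_C, totalDegree_X]
  | one =>
    refine le_trans (totalDegree_sub _ _) ?_
    simp only [max_le_iff]
    refine ⟨le_trans (totalDegree_mul _ _) ?_, le_trans (totalDegree_mul _ _) ?_⟩
    · have := totalDegree_mul (C (3/2 : ℝ)) (1 - X 0 ^ 2 : MvPolynomial (Fin 3) ℝ)
      have h2 := oneSubX0Sq_totalDegree
      simp only [totalDegree_C, totalDegree_X, Fin.reduceEq, if_false, ite_false, reduceIte] at *
      omega
    · have := totalDegree_pow (X 2 : MvPolynomial (Fin 3) ℝ) 3
      simp only [totalDegree_C, totalDegree_X, Fin.reduceEq, if_false, ite_false, reduceIte] at *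
      omega
  | more m ih1 ih2 =>
    refine le_trans (totalDegree_sub _ _) ?_
    simp only [max_le_iff]
    constructor
    · refine le_trans (totalDegree_mul _ _) ?_
      have h1 : ((2 * (1 - X 0 ^ 2) - X 2 ^ 2 : MvPolynomial (Fin 3) ℝ)).totalDegree ≤ 2 := by
        refine le_trans (totalDegree_sub _ _) ?_
        simp only [max_le_iff]
        constructor
        · refine le_trans (totalDegree_mul _ _) ?_
          have h2 := oneSubX0Sq_totalDegree
          have h3 : ((2 : MvPolynomial (Fin 3) ℝ)).totalDegree = 0 := by
            have : ((2 : MvPolynomial (Fin 3) ℝ)) = C (2:ℝ) := by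
              simp [map_ofNat]
            rw [this, totalDegree_C]
          omega
        · exact le_trans (totalDegree_pow _ _) (by simp [totalDegree_X])
      omega
    · refine le_trans (totalDegree_mul _ _) ?_
      have h1 := totalDegree_pow (1 - X 0 ^ 2 : MvPolynomial (Fin 3) ℝ) 2
      have h2 := oneSubX0Sq_totalDegree
      omega

lemma goldQ_degreeOf0 (m : ℕ) : MvPolynomial.degreeOf 0 (goldQ m) ≤ 2*m := by
  induction m using Nat.twoStepInduction with
  | zero =>
    refine le_trans (degreeOf_mul_le _ _ _) ?_
    simp [degreeOf_C, degreeOf_X]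
  | one =>
    refine le_trans (degreeOf_sub_le _ _ _) ?_
    simp only [max_le_iff]
    refine ⟨le_trans (degreeOf_mul_le _ _ _) ?_, le_trans (degreeOf_mul_le _ _ _) ?_⟩
    · have h1 := degreeOf_mul_le (0 : Fin 3) (C (3/2 : ℝ)) (1 - X 0 ^ 2 : MvPolynomial (Fin 3) ℝ)
      have h2 := oneSubX0Sq_degreeOf0
      simp only [degreeOf_C, degreeOf_X, Fin.reduceEq, if_false, ite_false, reduceIte] at *
      omega
    · have := degreeOf_pow_le (0 : Fin 3) (X 2 : MvPolynomial (Fin 3) ℝ) 3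
      simp only [degreeOf_C, degreeOf_X, Fin.reduceEq, if_false, ite_false, reduceIte] at *
      omega
  | more m ih1 ih2 =>
    refine le_trans (degreeOf_sub_le _ _ _) ?_
    simp only [max_le_iff]
    constructor
    · refine le_trans (degreeOf_mul_le _ _ _) ?_
      have h1 : MvPolynomial.degreeOf 0 ((2 * (1 - X 0 ^ 2) - X 2 ^ 2 : MvPolynomial (Fin 3) ℝ)) ≤ 2 := by
        refine le_trans (degreeOf_sub_le _ _ _) ?_
        simp only [max_le_iff]
        constructor
        · refine le_trans (degreeOf_mul_le _ _ _) ?_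
          have h2 := oneSubX0Sq_degreeOf0
          have h3 : MvPolynomial.degreeOf 0 ((2 : MvPolynomial (Fin 3) ℝ)) = 0 := by
            have : ((2 : MvPolynomial (Fin 3) ℝ)) = C (2:ℝ) := by simp [map_ofNat]
            rw [this, degreeOf_C]
          omega
        · exact le_trans (degreeOf_pow_le _ _ _) (by simp [degreeOf_X])
      omega
    · refine le_trans (degreeOf_mul_le _ _ _) ?_
      have h1 := degreeOf_pow_le (0 : Fin 3) (1 - X 0 ^ 2 : MvPolynomial (Fin 3) ℝ) 2
      have h2 := oneSubX0Sq_degreeOf0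
      omega

lemma coeff_oneSubX0Sq_pow (m : ℕ) :
    MvPolynomial.coeff (Finsupp.single 0 (2*m))
      ((1 - X 0 ^ 2 : MvPolynomial (Fin 3) ℝ)^m) = (-1)^m := by
  induction m with
  | zero => simp
  | succ m ih =>
    have hexp : ((1 - X 0 ^ 2 : MvPolynomial (Fin 3) ℝ))^(m+1)
        = (1 - X 0 ^ 2)^m - ((1 - X 0 ^ 2)^m * X 0) * X 0 := by ring
    have hsum : (Finsupp.single (0 : Fin 3) (2*(m+1)))
        = (Finsupp.single 0 (2*m) + Finsupp.single (0 : Fin 3) 1) + Finsupp.single 0 1 := by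
      rw [show 2*(m+1) = (2*m+1)+1 from by ring, Finsupp.single_add, Finsupp.single_add]
    have hzero : MvPolynomial.coeff (Finsupp.single 0 (2*(m+1)))
        ((1 - X 0 ^ 2 : MvPolynomial (Fin 3) ℝ)^m) = 0 := by
      apply coeff_eq_zero_of_totalDegree_lt
      have h1 : ((1 - X 0 ^ 2 : MvPolynomial (Fin 3) ℝ)^m).totalDegree ≤ 2*m := by
        have := totalDegree_pow (1 - X 0 ^ 2 : MvPolynomial (Fin 3) ℝ) m
        have := oneSubX0Sq_totalDegree
        nlinarith
      have h2 : (∑ i ∈ (Finsupp.single (0 : Fin 3) (2*(m+1))).support,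
          (Finsupp.single (0 : Fin 3) (2*(m+1))) i) = 2*(m+1) := by
        rw [Finsupp.support_single_ne_zero _ (by omega : 2*(m+1) ≠ 0),
          Finset.sum_singleton, Finsupp.single_eq_same]
      omega
    rw [hexp, coeff_sub, hzero, hsum, coeff_mul_X, coeff_mul_X, ih]
    ring

/-- For odd `n`, the defining equation of an `n`-gonal Goldberg dipyramid is an
algebraic equation of total degree `n`, of first degree in the aperture `x̃`
(variable `1`) and of degree `n − 1` in the height `x` (variable `0`), the
base length `l` being variable `2`. -/
theorem goldberg_equation_algebraic_odd (n : ℕ) (hn : 3 ≤ n) (hodd : Odd n) :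
    ∃ P : MvPolynomial (Fin 3) ℝ,
      P.totalDegree = n ∧
      MvPolynomial.degreeOf 1 P = 1 ∧
      MvPolynomial.degreeOf 0 P = n - 1 ∧
      ∀ x : ℝ, -1 < x → x < 1 → ∀ l : ℝ, 0 ≤ l → l ≤ 2 * Real.sqrt (1 - x ^ 2) →
        ∀ xt : ℝ,
          (xt = Real.sqrt (1 - x ^ 2) *
              Real.sin (n * Real.arcsin (l / (2 * Real.sqrt (1 - x ^ 2)))) ↔
            MvPolynomial.eval ![x, xt, l] P = 0) := by
  obtain ⟨m, hm⟩ := hodd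
  set P : MvPolynomial (Fin 3) ℝ := (1 - X 0 ^ 2)^m * X 1 - goldQ m with hP
  set c : Fin 3 →₀ ℕ := Finsupp.single 0 (2*m) + Finsupp.single 1 1 with hc
  have hc1 : c 1 = 1 := by
    simp [hc, Finsupp.single_apply]
  have hc0 : c 0 = 2*m := by
    simp [hc, Finsupp.single_apply]
  have hQc : MvPolynomial.coeff c (goldQ m) = 0 := by
    by_contra h
    exact goldQ_not_mem_vars m ((mem_vars 1).mpr
      ⟨c, mem_support_iff.mpr h, Finsupp.mem_support_iff.mpr (by rw [hc1]; omega)⟩)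
  have hPc : MvPolynomial.coeff c P = (-1)^m := by
    rw [hP, coeff_sub, hQc, sub_zero, hc, coeff_mul_X, coeff_oneSubX0Sq_pow]
  have hPcne : MvPolynomial.coeff c P ≠ 0 := by
    rw [hPc]
    exact pow_ne_zero _ (by norm_num)
  have hcsupp : c ∈ P.support := mem_support_iff.mpr hPcne
  have hpow_supported : ((1 - X 0 ^ 2 : MvPolynomial (Fin 3) ℝ)^m) ∈
      MvPolynomial.supported ℝ ({0, 2} : Set (Fin 3)) :=
    pow_mem (sub_mem (one_mem _) (pow_mem (X_mem_supported.mpr (by simp)) 2)) m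
  have hpow_deg1 : MvPolynomial.degreeOf 1 ((1 - X 0 ^ 2 : MvPolynomial (Fin 3) ℝ)^m) = 0 := by
    apply vars_zero_imp
    intro h
    have h2 := MvPolynomial.mem_supported.mp hpow_supported h
    simp only [Set.mem_insert_iff, Set.mem_singleton_iff] at h2
    rcases h2 with h2 | h2 <;> exact absurd h2 (by decide)
  have hQ1 : MvPolynomial.degreeOf 1 (goldQ m) = 0 :=
    vars_zero_imp _ _ (goldQ_not_mem_vars m)
  -- total degree
  have htd : P.totalDegree = n := by
    apply le_antisymm
    · refine le_trans (totalDegree_sub _ _) ?_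
      simp only [max_le_iff]
      constructor
      · refine le_trans (totalDegree_mul _ _) ?_
        have h1 := totalDegree_pow (1 - X 0 ^ 2 : MvPolynomial (Fin 3) ℝ) m
        have h2 := oneSubX0Sq_totalDegree
        have h3 : (X 1 : MvPolynomial (Fin 3) ℝ).totalDegree = 1 := totalDegree_X _
        nlinarith
      · have := goldQ_totalDegree m
        omega
    · have := le_totalDegree hcsupp
      have hsum : (c.sum fun _ e => e) = 2*m+1 := by
        rw [hc, Finsupp.sum_add_index' (fun _ => rfl) (fun _ _ _ => rfl),
          Finsupp.sum_single_index rfl, Finsupp.sum_single_index rfl]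
      omega
  refine ⟨P, htd, ?_, ?_, ?_⟩
  · -- degreeOf 1 = 1
    apply le_antisymm
    · refine le_trans (degreeOf_sub_le _ _ _) ?_
      simp only [max_le_iff]
      constructor
      · refine le_trans (degreeOf_mul_le _ _ _) ?_
        rw [hpow_deg1]
        simp [degreeOf_X]
      · rw [hQ1]; omega
    · rw [degreeOf_eq_sup]
      exact le_trans (le_of_eq hc1.symm) (Finset.le_sup (f := fun d => d 1) hcsupp)
  · -- degreeOf 0 = n - 1
    have h1 : MvPolynomial.degreeOf 0 P ≤ 2*m := by
      refine le_trans (degreeOf_sub_le _ _ _) ?_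
      simp only [max_le_iff]
      constructor
      · refine le_trans (degreeOf_mul_le _ _ _) ?_
        have h2 := degreeOf_pow_le (0 : Fin 3) (1 - X 0 ^ 2 : MvPolynomial (Fin 3) ℝ) m
        have h3 := oneSubX0Sq_degreeOf0
        have h4 : MvPolynomial.degreeOf 0 (X 1 : MvPolynomial (Fin 3) ℝ) = 0 := by
          simp [degreeOf_X]
        nlinarith
      · exact goldQ_degreeOf0 m
    have h2 : 2*m ≤ MvPolynomial.degreeOf 0 P := by
      rw [degreeOf_eq_sup]
      exact le_trans (le_of_eq hc0.symm) (Finset.le_sup (f := fun d => d 0) hcsupp)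
    omega
  · -- the equation
    intro x hx1 hx2 l hl0 hl2 xt
    set r : ℝ := Real.sqrt (1 - x ^ 2) with hrdef
    have hx2pos : (0:ℝ) < 1 - x ^ 2 := by nlinarith
    have hr2 : r ^ 2 = 1 - x ^ 2 := Real.sq_sqrt hx2pos.le
    have hrpos : 0 < r := Real.sqrt_pos.mpr hx2pos
    set θ : ℝ := Real.arcsin (l / (2 * r)) with hθ
    have hsin : Real.sin θ = l / (2 * r) := by
      apply Real.sin_arcsin
      · have h0 : (0:ℝ) ≤ l / (2*r) := by positivity
        linarith
      · rw [div_le_one (by positivity)]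
        exact hl2
    have hl : l = 2 * r * Real.sin θ := by
      rw [hsin]
      field_simp
    have heval : MvPolynomial.eval ![x, xt, l] P
        = r^(2*m) * xt - r^(2*m+1) * Real.sin ((2*m+1 : ℕ) * θ) := by
      rw [hP, map_sub, map_mul, map_pow, goldQ_eval x xt l r θ hr2 hl m]
      simp only [map_sub, map_one, map_pow, eval_X, Matrix.cons_val_zero,
        Matrix.cons_val_one, Matrix.head_cons]
      rw [← hr2]
      ring
    have hncast : ((n : ℕ) : ℝ) = ((2*m+1 : ℕ) : ℝ) := by
      rw [hm]
    rw [heval, hncast]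
    constructor
    · intro h
      rw [h]
      ring
    · intro h
      have h2 : r^(2*m) * xt = r^(2*m) * (r * Real.sin ((2*m+1 : ℕ) * θ)) := by
        rw [sub_eq_zero] at h
        rw [h]; ring
      have := mul_left_cancel₀ (pow_ne_zero (2*m) hrpos.ne') h2
      rw [this]
end

section
/- For every even integer n ≥ 4 there exists a nonzero polynomial P in three variables X, Y, L over ℝ with total degree 2n, with degree 2 in the variable Y, and with degree 2(n − 1) in the variable X, such that for all real x with −1 < x < 1, all real l with 0 ≤ l ≤ 2·√(1−x²), and all real x̃, if x̃ = √(1−x²)·sin(n·arcsin(l/(2·√(1−x²)))) then P(x, x̃, l) = 0. (Thus for even n the defining equation of an n-gonal Goldberg dipyramid reduces to an algebraic equation of order 2n, of second order with respect to the aperture x̃ and of order 2(n − 1) with respect to the height x.) -/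
/-!
Put `u = 1 - x²` and `θ = arcsin (l / (2√u))`, so that `sin² θ = l² / (4u)`. Since
`cos 2φ = 1 - 2 sin² φ` and `T_n (cos φ) = cos (nφ)`, `sin² (nθ) = q (sin² θ)` for the polynomial
`q = (1 - T_n (1 - 2X)) / 2` of degree at most `n` with `q(0) = 0`. Thus `x̃² = u · q (l² / (4u))`,
and multiplying by `u^(n-1)` clears the denominators: `x̃² u^(n-1) - Σₖ qₖ (l²/4)ᵏ u^(n-k)` vanishes,
and it is a polynomial in `x, x̃, l`. Its monomial `x^(2(n-1)) x̃²` has coefficient `(-1)^(n-1)` and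
attains all three degree bounds at once.
-/

open Real

section Univariate

open Polynomial Polynomial.Chebyshev

noncomputable def sinSqMulPoly (n : ℕ) : ℝ[X] :=
  C (1 / 2) * (1 - (T ℝ n).comp (1 - 2 * X))

theorem sinSqMulPoly_eval_sin_sq (n : ℕ) (θ : ℝ) :
    (sinSqMulPoly n).eval (sin θ ^ 2) = sin (n * θ) ^ 2 := by
  have h2θ : 1 - 2 * sin θ ^ 2 = cos (2 * θ) := by rw [cos_two_mul, cos_sq']; ring
  have h2nθ : cos (n * (2 * θ)) = 1 - 2 * sin (n * θ) ^ 2 := by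
    rw [← mul_assoc, mul_comm _ (2 : ℝ), mul_assoc, cos_two_mul, cos_sq']; ring
  simp only [sinSqMulPoly, eval_mul, eval_C, eval_sub, eval_one, eval_comp, eval_ofNat,
    eval_X, h2θ]
  rw [T_real_cos]
  push_cast
  rw [h2nθ]
  ring

theorem sinSqMulPoly_coeff_zero (n : ℕ) : (sinSqMulPoly n).coeff 0 = 0 := by
  simpa [coeff_zero_eq_eval_zero] using sinSqMulPoly_eval_sin_sq n 0

theorem natDegree_sinSqMulPoly_le (n : ℕ) : (sinSqMulPoly n).natDegree ≤ n := by
  have hlin : (1 - 2 * X : ℝ[X]).natDegree ≤ 1 := by compute_degree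
  have hcomp : ((T ℝ n).comp (1 - 2 * X)).natDegree ≤ n := by
    refine natDegree_comp_le.trans ?_
    rw [natDegree_T]
    simpa using Nat.mul_le_mul_left n hlin
  refine natDegree_C_mul_le _ _ |>.trans <| natDegree_sub_le _ _ |>.trans ?_
  simpa using hcomp

theorem pow_mul_eval_div_eq_sum {K : Type*} [Field K] {p : K[X]} {n : ℕ}
    (hp : p.natDegree ≤ n) (hp₀ : p.coeff 0 = 0) (a : K) {b : K} (hb : b ≠ 0) :
    b ^ n * p.eval (a / b) =
      ∑ k ∈ Finset.range n, p.coeff (k + 1) * a ^ (k + 1) * b ^ (n - 1 - k) := by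
  rw [eval_eq_sum_range' (Nat.lt_succ_of_le hp), Finset.sum_range_succ', hp₀, zero_mul, add_zero,
    Finset.mul_sum]
  refine Finset.sum_congr rfl fun k hk => ?_
  have hsplit : b ^ n = b ^ (k + 1) * b ^ (n - 1 - k) := by
    rw [← pow_add]; congr 1; have := Finset.mem_range.mp hk; omega
  rw [hsplit, div_pow]
  field_simp

end Univariate

section DegreeBounds

open MvPolynomial

variable {σ R : Type*} [CommRing R]

theorem totalDegree_one_sub_X_sq_le (i : σ) :
    (1 - X i ^ 2 : MvPolynomial σ R).totalDegree ≤ 2 := by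
  refine (totalDegree_sub _ _).trans (max_le (by simp) ?_)
  rw [X_pow_eq_monomial]
  exact (totalDegree_monomial_le _ _).trans (by simp)

theorem coeff_single_one_sub_X_sq_pow (i : σ) (k : ℕ) :
    coeff (Finsupp.single i (2 * k)) ((1 - X i ^ 2 : MvPolynomial σ R) ^ k) = (-1) ^ k := by
  induction k with
  | zero => simp
  | succ k ih =>
    have hlow :
        coeff (Finsupp.single i (2 * (k + 1))) ((1 - X i ^ 2 : MvPolynomial σ R) ^ k) = 0 := by
      refine coeff_eq_zero_of_totalDegree_lt ((totalDegree_pow _ _).trans_lt ?_)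
      have := totalDegree_one_sub_X_sq_le (R := R) i
      simp only [Finsupp.support_single _ (by omega : 2 * (k + 1) ≠ 0), Finset.sum_singleton,
        Finsupp.single_eq_same]
      nlinarith
    have hshift := coeff_mul_monomial (Finsupp.single i (2 * k)) (Finsupp.single i 2) (1 : R)
      ((1 - X i ^ 2 : MvPolynomial σ R) ^ k)
    rw [← X_pow_eq_monomial, ← Finsupp.single_add, mul_one] at hshift
    rw [pow_succ, mul_sub, mul_one, coeff_sub, hlow, show 2 * (k + 1) = 2 * k + 2 by ring, hshift,
      ih, pow_succ]
    ring

theorem degreeOf_one_sub_X_sq_of_ne {i j : σ} (h : i ≠ j) :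
    (1 - X j ^ 2 : MvPolynomial σ R).degreeOf i = 0 :=
  Nat.le_zero.mp <| (degreeOf_sub_le _ _ _).trans <| by simp [degreeOf_X_pow_of_ne _ h]

theorem degreeOf_C_mul_X_pow_of_ne {i j : σ} (h : i ≠ j) (c : R) (k : ℕ) :
    (C c * X j ^ k : MvPolynomial σ R).degreeOf i = 0 :=
  Nat.le_zero.mp <| (degreeOf_C_mul_le _ _ _).trans (degreeOf_X_pow_of_ne _ h).le

theorem degreeOf_pow_mul_pow_le (i : σ) (A B : MvPolynomial σ R) (a b : ℕ) :
    (A ^ a * B ^ b).degreeOf i ≤ a * A.degreeOf i + b * B.degreeOf i :=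
  (degreeOf_mul_le _ _ _).trans (add_le_add (degreeOf_pow_le _ _ _) (degreeOf_pow_le _ _ _))

theorem totalDegree_pow_mul_pow_le (A B : MvPolynomial σ R) (a b : ℕ) :
    (A ^ a * B ^ b).totalDegree ≤ a * A.totalDegree + b * B.totalDegree :=
  (totalDegree_mul _ _).trans (add_le_add (totalDegree_pow _ _) (totalDegree_pow _ _))

end DegreeBounds

section GoldbergPoly

open MvPolynomial

noncomputable def goldbergLengthPart (n : ℕ) : MvPolynomial (Fin 3) ℝ :=
  ∑ k ∈ Finset.range n, C ((sinSqMulPoly n).coeff (k + 1)) *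
    ((C (1 / 4) * X 2 ^ 2) ^ (k + 1) * (1 - X 0 ^ 2) ^ (n - 1 - k))

noncomputable def goldbergPoly (n : ℕ) : MvPolynomial (Fin 3) ℝ :=
  X 1 ^ 2 * (1 - X 0 ^ 2) ^ (n - 1) - goldbergLengthPart n

theorem degreeOf_one_goldbergLengthPart (n : ℕ) : (goldbergLengthPart n).degreeOf 1 = 0 := by
  refine Nat.le_zero.mp <| (degreeOf_sum_le _ _ _).trans <| Finset.sup_le fun k _ => ?_
  refine (degreeOf_C_mul_le _ _ _).trans <| (degreeOf_pow_mul_pow_le _ _ _ _ _).trans ?_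
  rw [degreeOf_C_mul_X_pow_of_ne (by decide), degreeOf_one_sub_X_sq_of_ne (by decide)]
  simp

theorem degreeOf_zero_goldbergLengthPart_le (n : ℕ) :
    (goldbergLengthPart n).degreeOf 0 ≤ 2 * (n - 1) := by
  refine (degreeOf_sum_le _ _ _).trans <| Finset.sup_le fun k _ => ?_
  refine (degreeOf_C_mul_le _ _ _).trans <| (degreeOf_pow_mul_pow_le _ _ _ _ _).trans ?_
  rw [degreeOf_C_mul_X_pow_of_ne (by decide)]
  have hU := (degreeOf_le_totalDegree _ 0).trans (totalDegree_one_sub_X_sq_le (R := ℝ) (0 : Fin 3))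
  calc _ ≤ (k + 1) * 0 + (n - 1 - k) * 2 := by gcongr
    _ ≤ 2 * (n - 1) := by omega

theorem totalDegree_goldbergLengthPart_le (n : ℕ) :
    (goldbergLengthPart n).totalDegree ≤ 2 * n := by
  refine (totalDegree_finsetSum _ _).trans <| Finset.sup_le fun k hk => ?_
  have hV : (C (1 / 4) * X 2 ^ 2 : MvPolynomial (Fin 3) ℝ).totalDegree ≤ 2 :=
    (totalDegree_mul _ _).trans (by simp)
  have hU := totalDegree_one_sub_X_sq_le (R := ℝ) (0 : Fin 3)
  have hk := Finset.mem_range.mp hk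
  refine (totalDegree_mul _ _).trans ?_
  rw [totalDegree_C, zero_add]
  calc _ ≤ (k + 1) * 2 + (n - 1 - k) * 2 :=
        (totalDegree_pow_mul_pow_le _ _ _ _).trans (by gcongr)
    _ = 2 * n := by omega

theorem coeff_goldbergPoly (n : ℕ) :
    (goldbergPoly n).coeff (Finsupp.single 1 2 + Finsupp.single 0 (2 * (n - 1))) =
      (-1) ^ (n - 1) := by
  have hlength :
      (goldbergLengthPart n).coeff (Finsupp.single 1 2 + Finsupp.single 0 (2 * (n - 1))) = 0 := by
    by_contra h
    have := monomial_le_degreeOf 1 (mem_support_iff.mpr h)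
    simp [degreeOf_one_goldbergLengthPart] at this
  rw [goldbergPoly, coeff_sub, hlength, sub_zero, X_pow_eq_monomial, coeff_monomial_mul, one_mul,
    coeff_single_one_sub_X_sq_pow]

theorem mem_support_goldbergPoly (n : ℕ) :
    Finsupp.single 1 2 + Finsupp.single 0 (2 * (n - 1)) ∈ (goldbergPoly n).support :=
  mem_support_iff.mpr <| by rw [coeff_goldbergPoly]; exact pow_ne_zero _ (by norm_num)

theorem goldbergPoly_ne_zero (n : ℕ) : goldbergPoly n ≠ 0 :=
  ne_zero_iff.mpr ⟨_, mem_support_iff.mp (mem_support_goldbergPoly n)⟩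

theorem totalDegree_goldbergPoly {n : ℕ} (hn : 1 ≤ n) :
    (goldbergPoly n).totalDegree = 2 * n := by
  refine le_antisymm ?_ ?_
  · refine (totalDegree_sub _ _).trans (max_le ?_ (totalDegree_goldbergLengthPart_le n))
    calc _ ≤ 2 * 1 + (n - 1) * 2 := (totalDegree_pow_mul_pow_le _ _ _ _).trans <| by
          gcongr; exacts [(totalDegree_X _).le, totalDegree_one_sub_X_sq_le 0]
      _ = 2 * n := by omega
  · have := le_totalDegree (mem_support_goldbergPoly n)
    rw [Finsupp.sum_add_index' (fun _ => rfl) (fun _ _ _ => rfl), Finsupp.sum_single_index rfl,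
      Finsupp.sum_single_index rfl] at this
    omega

theorem degreeOf_one_goldbergPoly (n : ℕ) : (goldbergPoly n).degreeOf 1 = 2 := by
  refine le_antisymm ?_ ?_
  · refine (degreeOf_sub_le _ _ _).trans (max_le ?_ (by simp [degreeOf_one_goldbergLengthPart]))
    refine (degreeOf_pow_mul_pow_le _ _ _ _ _).trans ?_
    simp [degreeOf_one_sub_X_sq_of_ne]
  · simpa using monomial_le_degreeOf 1 (mem_support_goldbergPoly n)

theorem degreeOf_zero_goldbergPoly (n : ℕ) : (goldbergPoly n).degreeOf 0 = 2 * (n - 1) := by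
  refine le_antisymm ?_ ?_
  · refine (degreeOf_sub_le _ _ _).trans (max_le ?_ (degreeOf_zero_goldbergLengthPart_le n))
    refine (degreeOf_pow_mul_pow_le _ _ _ _ _).trans ?_
    rw [degreeOf_X_of_ne (by decide), mul_zero, zero_add, mul_comm]
    gcongr
    exact (degreeOf_le_totalDegree _ _).trans (totalDegree_one_sub_X_sq_le 0)
  · simpa using monomial_le_degreeOf 0 (mem_support_goldbergPoly n)

theorem eval_goldbergPoly (n : ℕ) (x xt l : ℝ) (hx : 1 - x ^ 2 ≠ 0) :
    eval ![x, xt, l] (goldbergPoly n) =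
      xt ^ 2 * (1 - x ^ 2) ^ (n - 1) -
        (1 - x ^ 2) ^ n * (sinSqMulPoly n).eval (l ^ 2 / 4 / (1 - x ^ 2)) := by
  rw [pow_mul_eval_div_eq_sum (natDegree_sinSqMulPoly_le n) (sinSqMulPoly_coeff_zero n) _ hx]
  simp only [goldbergPoly, goldbergLengthPart, map_sub, map_mul, map_pow, map_one, map_sum,
    eval_X, eval_C, Matrix.cons_val_zero, Matrix.cons_val_one, Matrix.cons_val, sub_right_inj]
  exact Finset.sum_congr rfl fun k _ => by ring

theorem eval_goldbergPoly_eq_zero {n : ℕ} (hn : 1 ≤ n) {x l : ℝ} (hx : x ^ 2 < 1) (hl₀ : 0 ≤ l)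
    (hl : l ≤ 2 * √(1 - x ^ 2)) :
    eval ![x, √(1 - x ^ 2) * sin (n * arcsin (l / (2 * √(1 - x ^ 2)))), l] (goldbergPoly n) =
      0 := by
  have hu : 0 < 1 - x ^ 2 := by linarith
  set s := l / (2 * √(1 - x ^ 2))
  have hs : sin (arcsin s) = s :=
    sin_arcsin (by linarith [show 0 ≤ s by positivity]) (div_le_one_of_le₀ hl (by positivity))
  have hs_sq : l ^ 2 / 4 / (1 - x ^ 2) = sin (arcsin s) ^ 2 := by
    rw [hs, div_pow, mul_pow, sq_sqrt hu.le]; field_simp; ring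
  obtain ⟨m, rfl⟩ : ∃ m, n = m + 1 := ⟨n - 1, by omega⟩
  rw [eval_goldbergPoly _ _ _ _ hu.ne', hs_sq, sinSqMulPoly_eval_sin_sq, mul_pow, sq_sqrt hu.le,
    Nat.add_sub_cancel]
  ring

end GoldbergPoly

theorem goldberg_equation_algebraic_even_general (n : ℕ) (hn : 4 ≤ n) :
    ∃ P : MvPolynomial (Fin 3) ℝ, P ≠ 0 ∧
      P.totalDegree = 2 * n ∧
      MvPolynomial.degreeOf 1 P = 2 ∧
      MvPolynomial.degreeOf 0 P = 2 * (n - 1) ∧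
      ∀ x : ℝ, -1 < x → x < 1 → ∀ l : ℝ, 0 ≤ l → l ≤ 2 * Real.sqrt (1 - x ^ 2) →
        ∀ xt : ℝ,
          xt = Real.sqrt (1 - x ^ 2) *
              Real.sin (n * Real.arcsin (l / (2 * Real.sqrt (1 - x ^ 2)))) →
            MvPolynomial.eval ![x, xt, l] P = 0 := by
  have hn₁ : 1 ≤ n := by omega
  refine ⟨goldbergPoly n, goldbergPoly_ne_zero n, totalDegree_goldbergPoly hn₁,
    degreeOf_one_goldbergPoly n, degreeOf_zero_goldbergPoly n, ?_⟩
  rintro x hx₁ hx₂ l hl₀ hl xt rfl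
  exact eval_goldbergPoly_eq_zero hn₁ (by nlinarith) hl₀ hl

/-- For even `n`, the defining equation of an `n`-gonal Goldberg dipyramid
reduces to an algebraic equation of total degree `2n`, of second degree in the
aperture `x̃` (variable `1`) and of degree `2(n − 1)` in the height `x`
(variable `0`), the base length `l` being variable `2`. -/
theorem goldberg_equation_algebraic_even (n : ℕ) (hn : 4 ≤ n) (heven : Even n) :
    ∃ P : MvPolynomial (Fin 3) ℝ, P ≠ 0 ∧
      P.totalDegree = 2 * n ∧
      MvPolynomial.degreeOf 1 P = 2 ∧
      MvPolynomial.degreeOf 0 P = 2 * (n - 1) ∧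
      ∀ x : ℝ, -1 < x → x < 1 → ∀ l : ℝ, 0 ≤ l → l ≤ 2 * Real.sqrt (1 - x ^ 2) →
        ∀ xt : ℝ,
          xt = Real.sqrt (1 - x ^ 2) *
              Real.sin (n * Real.arcsin (l / (2 * Real.sqrt (1 - x ^ 2)))) →
            MvPolynomial.eval ![x, xt, l] P = 0 :=
  goldberg_equation_algebraic_even_general n hn
end
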